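/- Let $V \in \mathbb{R}^{l \times m_1}$, $U \in \mathbb{R}^{l \times m_2}$, $\lambda > 0$, and let $\hat A$ minimize $A \mapsto \|U - VA\|_2 + \lambda \|VA\|_1$ over $A \in \mathbb{R}^{m_1 \times m_2}$, where $\|\cdot\|_2$ is the Frobenius norm and $\|\cdot\|_1$ the nuclear norm. Then $\mathrm{rank}(V\hat A) \le 1/\lambda^2$. -/

import Mathlib

open Matrix

noncomputable def frobNorm {m n : ℕ} (A : Matrix (Fin m) (Fin n) ℝ) : ℝ :=
  Real.sqrt (∑ i, ∑ j, (A i j) ^ 2)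

/-- Nuclear norm: sum of singular values, i.e. square roots of eigenvalues of `Aᴴ * A`. -/
noncomputable def nuclearNorm {m n : ℕ} (A : Matrix (Fin m) (Fin n) ℝ) : ℝ :=
  ∑ i, Real.sqrt ((Matrix.isHermitian_conjTranspose_mul_self A).eigenvalues i)

/-- Operator (spectral) norm: supremum of `‖A v‖` over Euclidean unit vectors `v`. -/
noncomputable def opNorm {m n : ℕ} (M : Matrix (Fin m) (Fin n) ℝ) : ℝ :=
  sSup {c | ∃ v : Fin n → ℝ, ∑ i, (v i) ^ 2 = 1 ∧
    c = Real.sqrt (∑ i, (M.mulVec v i) ^ 2)}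

def IsOrthProj {k : ℕ} (P : Matrix (Fin k) (Fin k) ℝ) : Prop :=
  P.IsSymm ∧ P * P = P

/-- `P` is the orthogonal projector onto the orthogonal complement of the column space of `A`
(the span of the left singular vectors of `A` for nonzero singular values is the column space,
and similarly the row space, i.e. column space of `Aᵀ`, for right singular vectors). -/
def IsProjPerpCol {m n : ℕ} (A : Matrix (Fin m) (Fin n) ℝ)
    (P : Matrix (Fin m) (Fin m) ℝ) : Prop :=
  IsOrthProj P ∧ P * A = 0 ∧ P.rank = m - A.rank

/-- `P` is the orthogonal projector onto the column space of `A`. -/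
def IsProjCol {m n : ℕ} (A : Matrix (Fin m) (Fin n) ℝ)
    (P : Matrix (Fin m) (Fin m) ℝ) : Prop :=
  IsOrthProj P ∧ P * A = A ∧ P.rank = A.rank

/-!
Let `B = V * Ahat` have `r` nonzero singular values, all at least `t > 0`, and let `G` be
`t` times the pseudo-inverse square root of `Bᴴ * B`. Moving from `Ahat` to `Ahat - Ahat * G`
shrinks each nonzero singular value of `B` by exactly `t`, so the nuclear term drops by
`λ r t`, while the residual moves by `B * G`, whose `r` nonzero singular values all equal `t`,
so the Frobenius term grows by at most `t √r`. Optimality of `Ahat` forces `λ r t ≤ t √r`.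
-/

namespace Matrix

section Hermitian

variable {n 𝕜 : Type*} [RCLike 𝕜] [Fintype n] [DecidableEq n] {A : Matrix n n 𝕜}

lemma IsHermitian.trace_cfc (hA : A.IsHermitian) (f : ℝ → ℝ) :
    (cfc f A).trace = ∑ i, (f (hA.eigenvalues i) : 𝕜) := by
  rw [hA.cfc_eq, IsHermitian.cfc, Unitary.conjStarAlgAut_apply, trace_mul_cycle,
    Unitary.coe_star_mul_self, one_mul, trace_diagonal]
  rfl

lemma IsHermitian.sum_ite_eigenvalues_ne_zero_eq_rank_mul (hA : A.IsHermitian) (c : 𝕜) :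
    ∑ i, (if hA.eigenvalues i ≠ 0 then c else 0) = A.rank * c := by
  classical
  rw [hA.rank_eq_card_non_zero_eigs, Fintype.card_subtype, ← Finset.sum_filter,
    Finset.sum_const, nsmul_eq_mul]

end Hermitian

variable {m n 𝕜 : Type*} [RCLike 𝕜] [Fintype m] [Fintype n] [DecidableEq n]

lemma conjTranspose_mul_self_mul_cfc (X : Matrix m n 𝕜) (f : ℝ → ℝ) :
    (X * cfc f (Xᴴ * X))ᴴ * (X * cfc f (Xᴴ * X)) = cfc (fun x => x * f x ^ 2) (Xᴴ * X) := by
  have hM : IsSelfAdjoint (Xᴴ * X) := isHermitian_conjTranspose_mul_self X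
  have hcont (g : ℝ → ℝ) : ContinuousOn g (spectrum ℝ (Xᴴ * X)) :=
    (Xᴴ * X).finite_real_spectrum.continuousOn g
  have hsa : (cfc f (Xᴴ * X))ᴴ = cfc f (Xᴴ * X) := (cfc_predicate f (Xᴴ * X)).star_eq
  calc (X * cfc f (Xᴴ * X))ᴴ * (X * cfc f (Xᴴ * X))
      = cfc f (Xᴴ * X) * cfc id (Xᴴ * X) * cfc f (Xᴴ * X) := by
        rw [conjTranspose_mul, hsa, cfc_id ℝ (Xᴴ * X) hM]
        simp only [Matrix.mul_assoc]
    _ = cfc (fun x => x * f x ^ 2) (Xᴴ * X) := by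
        rw [← cfc_mul _ _ _ (hcont _) (hcont _), ← cfc_mul _ _ _ (hcont _) (hcont _)]
        congr 1
        ext x
        simp only [id]
        ring

/-- Unsorted and indexed by the columns of `X`, so padded with zeros. -/
noncomputable def singularValues (X : Matrix m n ℝ) (i : n) : ℝ :=
  √((isHermitian_conjTranspose_mul_self X).eigenvalues i)

lemma singularValues_nonneg (X : Matrix m n ℝ) (i : n) : 0 ≤ X.singularValues i :=
  Real.sqrt_nonneg _

lemma sum_ite_singularValues_ne_zero_eq_rank_mul (X : Matrix m n ℝ) (c : ℝ) :
    ∑ i, (if X.singularValues i ≠ 0 then c else 0) = X.rank * c := by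
  have hM := isHermitian_conjTranspose_mul_self X
  have h (i : n) : X.singularValues i ≠ 0 ↔ hM.eigenvalues i ≠ 0 :=
    Real.sqrt_ne_zero ((posSemidef_conjTranspose_mul_self X).eigenvalues_nonneg i)
  simp only [h]
  rw [hM.sum_ite_eigenvalues_ne_zero_eq_rank_mul, rank_conjTranspose_mul_self]

end Matrix

lemma exists_pos_le_of_pos {ι : Type*} [Fintype ι] (σ : ι → ℝ) :
    ∃ t > 0, ∀ i, 0 < σ i → t ≤ σ i := by
  classical
  set S := insert 1 ((Finset.univ.image σ).filter (0 < ·))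
  have hS : S.Nonempty := Finset.insert_nonempty _ _
  refine ⟨S.min' hS, (Finset.lt_min'_iff S hS).mpr fun x hx => ?_, fun i hi => S.min'_le _ ?_⟩
  · rcases Finset.mem_insert.mp hx with rfl | hx
    · exact one_pos
    · exact (Finset.mem_filter.mp hx).2
  · exact Finset.mem_insert_of_mem
      (Finset.mem_filter.mpr ⟨Finset.mem_image_of_mem σ (Finset.mem_univ i), hi⟩)

lemma le_one_div_sq_of_mul_le_sqrt {a r : ℝ} (ha : 0 < a) (hr : 0 ≤ r) (h : a * r ≤ √r) :
    r ≤ 1 / a ^ 2 := by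
  have hsq : (a * r) ^ 2 ≤ r := by
    simpa [Real.sq_sqrt hr] using pow_le_pow_left₀ (by positivity) h 2
  rw [le_div_iff₀ (by positivity)]
  nlinarith

variable {m n : ℕ}

lemma frobNorm_eq_sqrt_trace (X : Matrix (Fin m) (Fin n) ℝ) :
    frobNorm X = √(Xᴴ * X).trace := by
  rw [frobNorm, trace, Finset.sum_comm]
  simp [diag, mul_apply, sq]

lemma frobNorm_add_le (X Y : Matrix (Fin m) (Fin n) ℝ) :
    frobNorm (X + Y) ≤ frobNorm X + frobNorm Y := by
  let := Matrix.frobeniusNormedAddCommGroup (m := Fin m) (n := Fin n) (α := ℝ)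
  have h (Z : Matrix (Fin m) (Fin n) ℝ) : frobNorm Z = ‖Z‖ := by
    simp [frobNorm, frobenius_norm_def, Real.sqrt_eq_rpow]
  simpa only [h] using norm_add_le X Y

lemma nuclearNorm_eq_trace_cfc_sqrt (X : Matrix (Fin m) (Fin n) ℝ) :
    nuclearNorm X = (cfc Real.sqrt (Xᴴ * X)).trace := by
  rw [(isHermitian_conjTranspose_mul_self X).trace_cfc]
  rfl

lemma nuclearNorm_mul_cfc (X : Matrix (Fin m) (Fin n) ℝ) (φ : ℝ → ℝ) :
    nuclearNorm (X * cfc (fun x => φ √x) (Xᴴ * X)) =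
      ∑ i, X.singularValues i * |φ (X.singularValues i)| := by
  have hM := isHermitian_conjTranspose_mul_self X
  have hspec := (Xᴴ * X).finite_real_spectrum
  rw [nuclearNorm_eq_trace_cfc_sqrt, conjTranspose_mul_self_mul_cfc,
    ← cfc_comp _ _ _ hM.isSelfAdjoint ((hspec.image _).continuousOn _) (hspec.continuousOn _),
    hM.trace_cfc]
  refine Finset.sum_congr rfl fun i _ => ?_
  simp only [Function.comp_apply, RCLike.ofReal_real_eq_id, id]
  rw [Real.sqrt_mul ((posSemidef_conjTranspose_mul_self X).eigenvalues_nonneg i),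
    Real.sqrt_sq_eq_abs]
  rfl

lemma frobNorm_mul_cfc (X : Matrix (Fin m) (Fin n) ℝ) (φ : ℝ → ℝ) :
    frobNorm (X * cfc (fun x => φ √x) (Xᴴ * X)) =
      √(∑ i, (X.singularValues i * φ (X.singularValues i)) ^ 2) := by
  have hM := isHermitian_conjTranspose_mul_self X
  rw [frobNorm_eq_sqrt_trace, conjTranspose_mul_self_mul_cfc, hM.trace_cfc]
  congr 1
  refine Finset.sum_congr rfl fun i _ => ?_
  simp only [RCLike.ofReal_real_eq_id, id, mul_pow, singularValues,
    Real.sq_sqrt ((posSemidef_conjTranspose_mul_self X).eigenvalues_nonneg i)]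

/- Since `(√0)⁻¹ = 0`, `cfc (fun x => (√x)⁻¹) (Xᴴ * X)` is the pseudo-inverse square
root: it inverts the nonzero singular values of `X` and kills the kernel. -/

lemma nuclearNorm_sub_mul_cfc_inv_sqrt (X : Matrix (Fin m) (Fin n) ℝ) {t : ℝ}
    (ht : ∀ i, X.singularValues i ≠ 0 → t ≤ X.singularValues i) :
    nuclearNorm (X - X * cfc (fun x => t * (√x)⁻¹) (Xᴴ * X)) =
      nuclearNorm X - X.rank * t := by
  have hspec := (Xᴴ * X).finite_real_spectrum
  have hsub : X - X * cfc (fun x => t * (√x)⁻¹) (Xᴴ * X) =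
      X * cfc (fun x => 1 - t * (√x)⁻¹) (Xᴴ * X) := by
    rw [cfc_sub (fun _ => (1 : ℝ)) _ _ (hspec.continuousOn _) (hspec.continuousOn _),
      cfc_const_one ℝ _ (isHermitian_conjTranspose_mul_self X).isSelfAdjoint,
      Matrix.mul_sub, Matrix.mul_one]
  have hterm (i) : X.singularValues i * |1 - t * (X.singularValues i)⁻¹| =
      X.singularValues i - if X.singularValues i ≠ 0 then t else 0 := by
    by_cases h0 : X.singularValues i = 0
    · simp [h0]
    have hpos := (X.singularValues_nonneg i).lt_of_ne' h0
    rw [if_pos h0, ← abs_of_pos hpos, ← abs_mul, abs_of_pos hpos, mul_sub, mul_one,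
      mul_left_comm, mul_inv_cancel₀ h0, mul_one, abs_of_nonneg (sub_nonneg.mpr (ht i h0))]
  rw [hsub, nuclearNorm_mul_cfc X fun s => 1 - t * s⁻¹]
  simp only [hterm]
  rw [Finset.sum_sub_distrib, sum_ite_singularValues_ne_zero_eq_rank_mul]
  rfl

lemma frobNorm_mul_cfc_inv_sqrt (X : Matrix (Fin m) (Fin n) ℝ) (t : ℝ) :
    frobNorm (X * cfc (fun x => t * (√x)⁻¹) (Xᴴ * X)) = |t| * √X.rank := by
  have hterm (i) : (X.singularValues i * (t * (X.singularValues i)⁻¹)) ^ 2 =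
      if X.singularValues i ≠ 0 then t ^ 2 else 0 := by
    split_ifs with h0
    · rw [mul_left_comm, mul_inv_cancel₀ h0, mul_one]
    · simp [not_not.mp h0]
  rw [frobNorm_mul_cfc X fun s => t * s⁻¹]
  simp only [hterm]
  rw [sum_ite_singularValues_ne_zero_eq_rank_mul, Real.sqrt_mul' _ (sq_nonneg t),
    Real.sqrt_sq_eq_abs, mul_comm]

/-- If $\hat A$ minimizes $A ↦ ‖U - VA‖_2 + λ‖VA‖_1$ then $\mathrm{rank}(V\hat A) ≤ 1/λ^2$. -/
theorem stmt6 {l m1 m2 : ℕ} (V : Matrix (Fin l) (Fin m1) ℝ) (U : Matrix (Fin l) (Fin m2) ℝ)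
    (lam : ℝ) (hlam : 0 < lam) (Ahat : Matrix (Fin m1) (Fin m2) ℝ)
    (hmin : ∀ A : Matrix (Fin m1) (Fin m2) ℝ,
      frobNorm (U - V * Ahat) + lam * nuclearNorm (V * Ahat) ≤
        frobNorm (U - V * A) + lam * nuclearNorm (V * A)) :
    ((V * Ahat).rank : ℝ) ≤ 1 / lam ^ 2 := by
  set B := V * Ahat
  obtain ⟨t, ht0, ht⟩ := exists_pos_le_of_pos B.singularValues
  set G := cfc (fun x => t * (√x)⁻¹) (Bᴴ * B)
  have hnuc : nuclearNorm (V * (Ahat - Ahat * G)) = nuclearNorm B - B.rank * t := by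
    rw [Matrix.mul_sub, ← Matrix.mul_assoc]
    exact nuclearNorm_sub_mul_cfc_inv_sqrt B fun i hi =>
      ht i ((B.singularValues_nonneg i).lt_of_ne' hi)
  have hfrob : frobNorm (U - V * (Ahat - Ahat * G)) ≤ frobNorm (U - B) + t * √B.rank := by
    calc frobNorm (U - V * (Ahat - Ahat * G)) = frobNorm ((U - B) + B * G) := by
          rw [Matrix.mul_sub, ← Matrix.mul_assoc, sub_sub_eq_add_sub, add_sub_right_comm]
      _ ≤ frobNorm (U - B) + frobNorm (B * G) := frobNorm_add_le _ _
      _ = frobNorm (U - B) + t * √B.rank := by rw [frobNorm_mul_cfc_inv_sqrt, abs_of_pos ht0]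
  have hrank : t * (lam * B.rank) ≤ t * √B.rank := by
    have hopt := hmin (Ahat - Ahat * G)
    rw [hnuc] at hopt
    linarith
  exact le_one_div_sq_of_mul_le_sqrt hlam (Nat.cast_nonneg _) (le_of_mul_le_mul_left hrank ht0)
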